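/- Let V ∈ C²(ℝ²) with |d²V(x)| ≤ 0.01 for |x| ≤ 2, and suppose |V(0)| ≥ h and |dV(0)| ≥ 9|V(0)|^{1/2} with |dV(0)| ≤ 1. Then there exists x₀ with |x₀| ≤ (1/8)|V(0)|^{1/2} such that V(x₀) = 0, and moreover |dV(x₀)| ≥ 8|V(0)|^{1/2}. -/

import Mathlib

/-! The gradient `dV` moves by at most `0.01 ‖x‖` on the ball, so on the ball of radius
`T = √|V 0| / 8` the first-order Taylor expansion of `V` is accurate up to `0.01 T²`. Walking
from `0` a distance `T` in the direction `-sign (V 0) • ∇V 0 / ‖∇V 0‖` therefore changes `V` by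
roughly `-T ‖dV 0‖ ≤ -9 T √|V 0|`, which overshoots `|V 0|`; the intermediate value theorem
gives the zero, and the gradient there is still at least `‖dV 0‖ - 0.01 T`. -/

section

variable {E : Type*} [NormedAddCommGroup E]

theorem exists_norm_le_eq_zero_of_fderiv_apply_le [NormedSpace ℝ E] {V : E → ℝ}
    (hV : Differentiable ℝ V) {u : E} (hu : ‖u‖ ≤ 1) {C T : ℝ} (hT : 0 ≤ T)
    (hC : ∀ x, ‖x‖ ≤ T → ‖fderiv ℝ V x - fderiv ℝ V 0‖ ≤ C) (h0 : 0 ≤ V 0)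
    (hsmall : V 0 + C * T ≤ -fderiv ℝ V 0 u * T) :
    ∃ x, ‖x‖ ≤ T ∧ V x = 0 := by
  have hnorm : ∀ t ∈ Set.Icc 0 T, ‖t • u‖ ≤ T := fun t ht => by
    rw [norm_smul, Real.norm_of_nonneg ht.1]
    nlinarith [ht.1, ht.2, norm_nonneg u]
  have hball : ∀ x ∈ Metric.closedBall (0 : E) T, ‖fderiv ℝ V x - fderiv ℝ V 0‖ ≤ C :=
    fun x hx => hC x (mem_closedBall_zero_iff.mp hx)
  have hTu : V (T • u) ≤ 0 := by
    have htaylor := (convex_closedBall (0 : E) T).norm_image_sub_le_of_norm_fderiv_le'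
      (fun x _ => (hV x)) hball (Metric.mem_closedBall_self hT)
      (mem_closedBall_zero_iff.mpr (hnorm T ⟨hT, le_rfl⟩))
    rw [sub_zero, map_smul, smul_eq_mul, Real.norm_eq_abs] at htaylor
    have hCT : C * ‖T • u‖ ≤ C * T :=
      mul_le_mul_of_nonneg_left (hnorm T ⟨hT, le_rfl⟩) ((norm_nonneg _).trans (hC 0 (by simpa)))
    linarith [(abs_le.mp htaylor).2]
  have hcont : ContinuousOn (fun t : ℝ => V (t • u)) (Set.Icc 0 T) :=
    (hV.continuous.comp (continuous_id.smul continuous_const)).continuousOn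
  obtain ⟨t, ht, hzero⟩ := intermediate_value_Icc' hT hcont ⟨hTu, by simpa using h0⟩
  exact ⟨t • u, hnorm t ht, hzero⟩

theorem exists_norm_le_one_apply_eq_norm [InnerProductSpace ℝ E] [CompleteSpace E]
    (f : StrongDual ℝ E) : ∃ u : E, ‖u‖ ≤ 1 ∧ f u = ‖f‖ := by
  set v := (InnerProductSpace.toDual ℝ E).symm f
  have hv : ‖v‖ = ‖f‖ := LinearIsometryEquiv.norm_map _ f
  refine ⟨‖f‖⁻¹ • v, ?_, ?_⟩
  · rw [norm_smul, norm_inv, norm_norm, hv]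
    exact inv_mul_le_one_of_le₀ le_rfl (norm_nonneg f)
  · rw [map_smul, ← InnerProductSpace.toDual_symm_apply, real_inner_self_eq_norm_sq, hv,
      smul_eq_mul]
    rcases eq_or_ne ‖f‖ 0 with hf | hf
    · simp [hf]
    · field_simp

theorem exists_norm_le_eq_zero_of_norm_fderiv_sub_le [InnerProductSpace ℝ E] [CompleteSpace E]
    {V : E → ℝ} (hV : Differentiable ℝ V) {C T : ℝ} (hT : 0 ≤ T)
    (hC : ∀ x, ‖x‖ ≤ T → ‖fderiv ℝ V x - fderiv ℝ V 0‖ ≤ C)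
    (hsmall : |V 0| + C * T ≤ ‖fderiv ℝ V 0‖ * T) :
    ∃ x, ‖x‖ ≤ T ∧ V x = 0 := by
  obtain ⟨u, hu, hfu⟩ := exists_norm_le_one_apply_eq_norm (fderiv ℝ V 0)
  rcases le_total 0 (V 0) with hpos | hneg
  · refine exists_norm_le_eq_zero_of_fderiv_apply_le hV (u := -u) (by rwa [norm_neg]) hT hC
      hpos ?_
    rw [map_neg, hfu, neg_neg, ← abs_of_nonneg hpos]
    exact hsmall
  · have hfderiv : ∀ x, fderiv ℝ (-V) x = -fderiv ℝ V x := fun x => fderiv_neg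
    obtain ⟨x, hx, hzero⟩ := exists_norm_le_eq_zero_of_fderiv_apply_le hV.neg hu hT
      (fun x hx => by rw [hfderiv, hfderiv, neg_sub_neg, norm_sub_rev]; exact hC x hx)
      (by simpa using hneg) (by rw [hfderiv]; simp [hfu, ← abs_of_nonpos hneg, hsmall])
    exact ⟨x, hx, neg_eq_zero.mp hzero⟩

end

theorem stmt_8_general (V : EuclideanSpace ℝ (Fin 2) → ℝ) (hV : ContDiff ℝ 2 V)
    (hHess : ∀ x : EuclideanSpace ℝ (Fin 2), ‖x‖ ≤ 2 → ‖fderiv ℝ (fderiv ℝ V) x‖ ≤ 0.01)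
    (hdV : 9 * Real.sqrt |V 0| ≤ ‖fderiv ℝ V 0‖)
    (hdV1 : ‖fderiv ℝ V 0‖ ≤ 1) :
    ∃ x₀ : EuclideanSpace ℝ (Fin 2), ‖x₀‖ ≤ (1/8) * Real.sqrt |V 0| ∧ V x₀ = 0 ∧
      8 * Real.sqrt |V 0| ≤ ‖fderiv ℝ V x₀‖ := by
  set s := Real.sqrt |V 0|
  have hs : 0 ≤ s := Real.sqrt_nonneg _
  have hs2 : s ^ 2 = |V 0| := Real.sq_sqrt (abs_nonneg _)
  have hs9 : 9 * s ≤ 1 := hdV.trans hdV1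
  have hgrad : ∀ x, ‖x‖ ≤ s / 8 → ‖fderiv ℝ V x - fderiv ℝ V 0‖ ≤ 0.01 * (s / 8) := by
    intro x hx
    have hdd : Differentiable ℝ (fderiv ℝ V) :=
      (hV.fderiv_right (m := 1) le_rfl).differentiable one_ne_zero
    have hlip := (convex_closedBall (0 : EuclideanSpace ℝ (Fin 2)) 2).norm_image_sub_le_of_norm_fderiv_le
      (fun y _ => hdd y) (fun y hy => hHess y (mem_closedBall_zero_iff.mp hy))
      (Metric.mem_closedBall_self (by norm_num)) (mem_closedBall_zero_iff.mpr (by linarith))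
    rw [sub_zero] at hlip
    linarith
  obtain ⟨x₀, hx₀, hVx₀⟩ := exists_norm_le_eq_zero_of_norm_fderiv_sub_le
    (hV.differentiable two_ne_zero) (by positivity) hgrad (by nlinarith)
  refine ⟨x₀, by linarith, hVx₀, ?_⟩
  have hclose := hgrad x₀ hx₀
  rw [norm_sub_rev] at hclose
  linarith [norm_sub_norm_le (fderiv ℝ V 0) (fderiv ℝ V x₀)]

/-- If `V ∈ C²(ℝ²)` with `|d²V| ≤ 0.01` on `|x| ≤ 2`, `|V(0)| ≥ h`,
`|dV(0)| ≥ 9|V(0)|^{1/2}`, and `|dV(0)| ≤ 1`, then there is `x₀` with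
`|x₀| ≤ (1/8)|V(0)|^{1/2}`, `V(x₀) = 0`, and `|dV(x₀)| ≥ 8|V(0)|^{1/2}`. -/
theorem stmt_8 (V : EuclideanSpace ℝ (Fin 2) → ℝ) (hV : ContDiff ℝ 2 V)
    (hHess : ∀ x : EuclideanSpace ℝ (Fin 2), ‖x‖ ≤ 2 → ‖fderiv ℝ (fderiv ℝ V) x‖ ≤ 0.01)
    (h : ℝ) (hh : 0 < h) (hh1 : h ≤ 1)
    (hV0 : h ≤ |V 0|)
    (hdV : 9 * Real.sqrt |V 0| ≤ ‖fderiv ℝ V 0‖)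
    (hdV1 : ‖fderiv ℝ V 0‖ ≤ 1) :
    ∃ x₀ : EuclideanSpace ℝ (Fin 2), ‖x₀‖ ≤ (1/8) * Real.sqrt |V 0| ∧ V x₀ = 0 ∧
      8 * Real.sqrt |V 0| ≤ ‖fderiv ℝ V x₀‖ :=
  stmt_8_general V hV hHess hdV hdV1
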